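/- arXiv:1708.02397 — 2 statements merged into one kernel-verified Lean document; each statement's English description precedes it below -/
import Mathlib

section
/- For the star graph S_n on n ≥ 2 vertices (one center joined to n − 1 leaves), the harmonic index of its total graph satisfies H(T(S_n)) = (n − 1)·(1/2 + 2/(3n − 2) + 2/(n + 2)). -/
/-! In `T(K_{1,m})` the centre has degree `2m`, each leaf degree `2`, and each edge-vertex degree
`m + 1` (the centre, its leaf and the other `m - 1` edges). The `m` centre–leaf and `m(m-1)/2`
edge–edge edges of `T` all have weight `1/(m+1)` and together contribute `m/2`; the `m`
centre–edge and `m` leaf–edge edges contribute `2m/(3m+1)` and `2m/(m+3)`. -/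

open scoped Classical

/-- The total graph `T(G)` of a simple graph `G`: its vertex set is `V(G) ∪ E(G)`,
and two vertices of `T(G)` are adjacent iff the corresponding elements of `G`
are adjacent vertices, adjacent (distinct, sharing an endpoint) edges, or an
incident vertex–edge pair. -/
def SimpleGraph.totalGraph {V : Type*} (G : SimpleGraph V) :
    SimpleGraph (V ⊕ G.edgeSet) where
  Adj x y :=
    match x, y with
    | Sum.inl u, Sum.inl v => G.Adj u v
    | Sum.inl u, Sum.inr e => u ∈ (e : Sym2 V)
    | Sum.inr e, Sum.inl u => u ∈ (e : Sym2 V)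
    | Sum.inr e, Sum.inr f => e ≠ f ∧ ∃ v, v ∈ (e : Sym2 V) ∧ v ∈ (f : Sym2 V)
  symm := by
    constructor
    rintro (u | e) (v | f) h
    · exact h.symm
    · exact h
    · exact h
    · exact ⟨h.1.symm, h.2.imp fun v hv => ⟨hv.2, hv.1⟩⟩
  loopless := by
    constructor
    rintro (u | e) h
    · exact G.irrefl h
    · exact h.1 rfl

/-- The harmonic index `H(G) = ∑_{uv ∈ E(G)} 2 / (deg u + deg v)`. -/
noncomputable def SimpleGraph.harmonicIndex {V : Type*} [Fintype V] (G : SimpleGraph V) : ℝ :=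
  ∑ e ∈ G.edgeFinset,
    Sym2.lift ⟨fun u v => 2 / ((G.degree u : ℝ) + (G.degree v : ℝ)),
      fun u v => by simp [add_comm]⟩ e

open Finset

theorem Fintype.sum_ite_eq_zero_add_self {ι M : Type*} [Fintype ι] [DecidableEq ι]
    [AddCommMonoid M] (i : ι) (c : M) : (∑ j, if i = j then 0 else c) + c = Fintype.card ι • c := by
  rw [← Finset.add_sum_erase _ _ (mem_univ i), if_pos rfl, zero_add,
    Finset.sum_congr rfl fun j hj => if_neg (Finset.ne_of_mem_erase hj).symm,
    Finset.sum_erase_add _ _ (mem_univ i), Finset.sum_const, Finset.card_univ]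

namespace SimpleGraph

section Darts

variable {V : Type*} [Fintype V] (G : SimpleGraph V) [DecidableRel G.Adj] {M : Type*}
  [AddCommMonoid M]

theorem sum_darts_eq_sum_sum_ite (g : V → V → M) :
    ∑ d : G.Dart, g d.fst d.snd = ∑ x, ∑ y, if G.Adj x y then g x y else 0 := by
  let e : G.Dart ≃ {p : V × V // G.Adj p.1 p.2} :=
    ⟨fun d => ⟨d.toProd, d.adj⟩, fun p => ⟨p.1, p.2⟩, fun _ => rfl, fun _ => rfl⟩
  rw [← Fintype.sum_prod_type' (f := fun x y => if G.Adj x y then g x y else 0),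
    ← Finset.sum_filter, Finset.sum_subtype _ fun p => Finset.mem_filter_univ p]
  exact Fintype.sum_equiv e _ _ fun _ => rfl

theorem sum_darts_edge [DecidableEq V] (f : Sym2 V → M) :
    ∑ d : G.Dart, f d.edge = 2 • ∑ e ∈ G.edgeFinset, f e := by
  rw [← Finset.sum_fiberwise_of_maps_to (g := Dart.edge) (t := G.edgeFinset)
    (fun d _ => G.mem_edgeFinset.mpr d.edge_mem), Finset.smul_sum]
  refine Finset.sum_congr rfl fun e he => ?_
  rw [Finset.sum_congr rfl fun d hd => congrArg f (Finset.mem_filter.mp hd).2, Finset.sum_const,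
    G.dart_edge_fiber_card e (G.mem_edgeFinset.mp he)]

end Darts

noncomputable def harmonicIndexAt {V : Type*} [Fintype V] (G : SimpleGraph V) (x : V) : ℝ :=
  ∑ y, if G.Adj x y then ((G.degree x : ℝ) + G.degree y)⁻¹ else 0

theorem harmonicIndex_eq_sum_harmonicIndexAt {V : Type*} [Fintype V] (G : SimpleGraph V) :
    G.harmonicIndex = ∑ x, G.harmonicIndexAt x := by
  let w (u v : V) : ℝ := 2 / ((G.degree u : ℝ) + G.degree v)
  have h := G.sum_darts_edge (Sym2.lift ⟨w, fun u v => by simp only [w, add_comm]⟩)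
  rw [nsmul_eq_mul, Nat.cast_ofNat] at h
  calc G.harmonicIndex = (∑ d : G.Dart, w d.fst d.snd) / 2 := by
        rw [eq_div_iff two_ne_zero, mul_comm]
        exact h.symm
    _ = _ := by
        rw [sum_darts_eq_sum_sum_ite]
        simp only [harmonicIndexAt, sum_div, ite_div, zero_div, w,
          div_div_cancel_left' (two_ne_zero (α := ℝ))]

section TotalGraph

variable {V : Type*} (G : SimpleGraph V) {u v : V} {e f : G.edgeSet}

@[simp]
theorem totalGraph_adj_inl_inl : G.totalGraph.Adj (.inl u) (.inl v) ↔ G.Adj u v := Iff.rfl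

@[simp]
theorem totalGraph_adj_inl_inr : G.totalGraph.Adj (.inl u) (.inr e) ↔ u ∈ (e : Sym2 V) := Iff.rfl

@[simp]
theorem totalGraph_adj_inr_inl : G.totalGraph.Adj (.inr e) (.inl u) ↔ u ∈ (e : Sym2 V) := Iff.rfl

theorem totalGraph_adj_inr_inr :
    G.totalGraph.Adj (.inr e) (.inr f) ↔ e ≠ f ∧ ∃ v, v ∈ (e : Sym2 V) ∧ v ∈ (f : Sym2 V) :=
  Iff.rfl

end TotalGraph

section Star

variable (m : ℕ)

local notation "𝒮" => completeBipartiteGraph (Fin 1) (Fin m)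

local notation "𝒯" => totalGraph (completeBipartiteGraph (Fin 1) (Fin m))

def starEdge (i : Fin m) : (𝒮).edgeSet :=
  ⟨s(.inl 0, .inr i), by simp⟩

@[simp]
theorem mem_starEdge {i : Fin m} {x : Fin 1 ⊕ Fin m} :
    x ∈ (starEdge m i : Sym2 (Fin 1 ⊕ Fin m)) ↔ x = .inl 0 ∨ x = .inr i :=
  Sym2.mem_iff

theorem starEdge_bijective : Function.Bijective (starEdge m) := by
  refine ⟨fun i j h => by simpa [starEdge] using h, fun ⟨e, he⟩ => ?_⟩
  rw [edgeSet_completeBipartiteGraph] at he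
  obtain ⟨⟨a, i⟩, rfl⟩ := he
  exact ⟨i, by rw [Subsingleton.elim a 0]; rfl⟩

theorem sum_totalGraph_star {M : Type*} [AddCommMonoid M] (f : (Fin 1 ⊕ Fin m) ⊕ (𝒮).edgeSet → M) :
    ∑ x, f x = f (.inl (.inl 0)) + ∑ j, f (.inl (.inr j)) + ∑ i, f (.inr (starEdge m i)) := by
  rw [Fintype.sum_sum_type, Fintype.sum_sum_type, Fin.sum_univ_one,
    (starEdge_bijective m).sum_comp fun e => f (.inr e)]

@[simp]
theorem totalGraph_star_adj_starEdge {i j : Fin m} :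
    (𝒯).Adj (.inr (starEdge m i)) (.inr (starEdge m j)) ↔ i ≠ j := by
  rw [totalGraph_adj_inr_inr, (starEdge_bijective m).injective.ne_iff]
  exact ⟨And.left, fun h => ⟨h, .inl 0, by simp, by simp⟩⟩

@[simp]
theorem degree_totalGraph_star_center : (𝒯).degree (.inl (.inl 0)) = 2 * m := by
  rw [← card_neighborFinset_eq_degree, neighborFinset_eq_filter, card_filter, sum_totalGraph_star]
  simp [two_mul]

@[simp]
theorem degree_totalGraph_star_leaf (j : Fin m) : (𝒯).degree (.inl (.inr j)) = 2 := by
  rw [← card_neighborFinset_eq_degree, neighborFinset_eq_filter, card_filter, sum_totalGraph_star]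
  simp

@[simp]
theorem degree_totalGraph_star_edge (i : Fin m) : (𝒯).degree (.inr (starEdge m i)) = m + 1 := by
  rw [← card_neighborFinset_eq_degree, neighborFinset_eq_filter, card_filter, sum_totalGraph_star]
  have other_edges := Fintype.sum_ite_eq_zero_add_self i 1
  simp only [Fintype.card_fin, smul_eq_mul, mul_one] at other_edges
  simp only [totalGraph_adj_inr_inl, mem_starEdge, reduceCtorEq, or_false, ↓reduceIte,
    Sum.inr.injEq, false_or, sum_ite_eq', mem_univ, totalGraph_star_adj_starEdge, ne_eq, ite_not]
  omega

theorem harmonicIndexAt_totalGraph_star_center :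
    (𝒯).harmonicIndexAt (.inl (.inl 0)) = m / (2 * m + 2) + m / (3 * m + 1) := by
  rw [harmonicIndexAt, sum_totalGraph_star]
  simp only [SimpleGraph.irrefl, ↓reduceIte, totalGraph_adj_inl_inl, completeBipartiteGraph_adj,
    Sum.isLeft_inl, Sum.isRight_inr, and_self, Sum.isRight_inl, Bool.false_eq_true,
    Sum.isLeft_inr, or_false, degree_totalGraph_star_center, Nat.cast_mul, Nat.cast_ofNat,
    degree_totalGraph_star_leaf, sum_const, card_univ, Fintype.card_fin, nsmul_eq_mul, zero_add,
    totalGraph_adj_inl_inr, mem_starEdge, reduceCtorEq, degree_totalGraph_star_edge, Nat.cast_add,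
    Nat.cast_one]
  ring

theorem harmonicIndexAt_totalGraph_star_leaf (j : Fin m) :
    (𝒯).harmonicIndexAt (.inl (.inr j)) = 1 / (2 * m + 2) + 1 / (m + 3) := by
  rw [harmonicIndexAt, sum_totalGraph_star]
  simp only [totalGraph_adj_inl_inl, completeBipartiteGraph_adj, Sum.isLeft_inr,
    Bool.false_eq_true, Sum.isRight_inl, and_self, Sum.isRight_inr, Sum.isLeft_inl, or_true,
    ↓reduceIte, degree_totalGraph_star_leaf, Nat.cast_ofNat, degree_totalGraph_star_center,
    Nat.cast_mul, and_true, and_false, or_self, sum_const_zero, add_zero, totalGraph_adj_inl_inr,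
    mem_starEdge, reduceCtorEq, Sum.inr.injEq, false_or, degree_totalGraph_star_edge,
    Nat.cast_add, Nat.cast_one, sum_ite_eq, mem_univ]
  ring

theorem harmonicIndexAt_totalGraph_star_edge (i : Fin m) :
    (𝒯).harmonicIndexAt (.inr (starEdge m i)) =
      1 / (3 * m + 1) + 1 / (m + 3) + (m - 1) / (2 * m + 2) := by
  have other_edges (c : ℝ) : (∑ j, if i = j then 0 else c) = m * c - c := by
    rw [eq_sub_iff_add_eq, Fintype.sum_ite_eq_zero_add_self, Fintype.card_fin, nsmul_eq_mul]
  rw [harmonicIndexAt, sum_totalGraph_star]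
  simp only [totalGraph_adj_inr_inl, mem_starEdge, reduceCtorEq, or_false, ↓reduceIte,
    degree_totalGraph_star_edge, Nat.cast_add, Nat.cast_one, degree_totalGraph_star_center,
    Nat.cast_mul, Nat.cast_ofNat, Sum.inr.injEq, false_or, degree_totalGraph_star_leaf,
    sum_ite_eq', mem_univ, totalGraph_star_adj_starEdge, ne_eq, ite_not, other_edges]
  ring

theorem harmonicIndex_totalGraph_completeBipartiteGraph_fin_one :
    (𝒯).harmonicIndex = (m : ℝ) * (1 / 2 + 2 / (3 * m + 1) + 2 / (m + 3)) := by
  rw [harmonicIndex_eq_sum_harmonicIndexAt, sum_totalGraph_star,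
    harmonicIndexAt_totalGraph_star_center]
  simp only [harmonicIndexAt_totalGraph_star_leaf, harmonicIndexAt_totalGraph_star_edge, sum_const,
    card_univ, Fintype.card_fin, nsmul_eq_mul]
  field_simp
  ring

end Star

end SimpleGraph

/-- For the star graph `S_n` on `n ≥ 2` vertices (one center joined to `n - 1` leaves,
i.e. `K_{1,n-1}`), `H(T(S_n)) = (n - 1)·(1/2 + 2/(3n - 2) + 2/(n + 2))`. -/
theorem harmonicIndex_totalGraph_star (n : ℕ) (hn : 2 ≤ n) :
    (completeBipartiteGraph (Fin 1) (Fin (n - 1))).totalGraph.harmonicIndex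
      = ((n : ℝ) - 1) * (1 / 2 + 2 / (3 * (n : ℝ) - 2) + 2 / ((n : ℝ) + 2)) := by
  obtain ⟨m, rfl⟩ : ∃ m, n = m + 1 := ⟨n - 1, by omega⟩
  rw [Nat.add_sub_cancel, SimpleGraph.harmonicIndex_totalGraph_completeBipartiteGraph_fin_one]
  push_cast
  ring
end

section
/- Let G be a k-regular finite simple graph on n vertices (k ≥ 1). Then the harmonic index of its total graph satisfies H(T(G)) = n(k + 2)/4. -/
open scoped Classical

/-! A vertex of `T(G)` keeps its `k` neighbours and gains its `k` incident edges; an edge `ab`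
meets its two endpoints and the `deg a + deg b - 2` other edges at `a` or `b`. So `T(G)` is
`2k`-regular. In a `d`-regular graph with `d ≥ 1` each edge contributes `1/d` and there are
`|V| d / 2` edges, so the harmonic index is `|V| / 2`; and `T(G)` has `n + nk/2` vertices. -/

open Finset

namespace SimpleGraph

variable {V : Type*} [Fintype V] {G : SimpleGraph V}

theorem IsRegularOfDegree.card_mul_eq_two_mul_card_edgeFinset {d : ℕ}
    (h : G.IsRegularOfDegree d) : Fintype.card V * d = 2 * #G.edgeFinset := by
  rw [← G.sum_degrees_eq_twice_card_edges, sum_congr rfl fun v _ => h.degree_eq v, sum_const,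
    smul_eq_mul, card_univ]

theorem IsRegularOfDegree.harmonicIndex_eq {d : ℕ} (h : G.IsRegularOfDegree d) (hd : d ≠ 0) :
    G.harmonicIndex = Fintype.card V / 2 := by
  have hcard : (Fintype.card V : ℝ) * d = 2 * #G.edgeFinset := by
    exact_mod_cast h.card_mul_eq_two_mul_card_edgeFinset
  rw [harmonicIndex, sum_congr rfl (g := fun _ => (d : ℝ)⁻¹) fun e _ => ?_, sum_const,
    nsmul_eq_mul]
  · field_simp
    linarith
  · induction e using Sym2.ind with
    | _ u v =>
      simp only [Sym2.lift_mk, h.degree_eq, ← two_mul, div_mul_cancel_left₀ (two_ne_zero' ℝ)]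

theorem degree_totalGraph (x : V ⊕ G.edgeSet) :
    G.totalGraph.degree x = Fintype.card {v // G.totalGraph.Adj x (.inl v)} +
      Fintype.card {e // G.totalGraph.Adj x (.inr e)} := by
  rw [← card_neighborSet_eq_degree, ← Fintype.card_sum]
  exact Fintype.card_congr Equiv.subtypeSum

theorem degree_totalGraph_inl (u : V) : G.totalGraph.degree (.inl u) = 2 * G.degree u := by
  rw [degree_totalGraph, two_mul]
  congr 1
  · rw [← card_neighborSet_eq_degree]
    exact Fintype.card_congr (Equiv.refl _)
  · rw [← card_incidenceSet_eq_degree]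
    exact Fintype.card_congr (Equiv.subtypeSubtypeEquivSubtypeInter (· ∈ G.edgeSet) (u ∈ ·))

theorem card_totalGraph_adj_inr_inr {a b : V} (h : G.Adj a b) :
    Fintype.card {f // G.totalGraph.Adj (.inr ⟨s(a, b), h⟩) (.inr f)} =
      #((G.incidenceFinset a ∪ G.incidenceFinset b).erase s(a, b)) := by
  calc _ = Fintype.card {f // f ∈ G.edgeSet ∧ s(a, b) ≠ f ∧ ∃ v, v ∈ s(a, b) ∧ v ∈ f} :=
        Fintype.card_congr <| (Equiv.subtypeEquivRight fun f => by
          simp [totalGraph, Subtype.ext_iff]).trans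
            (Equiv.subtypeSubtypeEquivSubtypeInter (· ∈ G.edgeSet) _)
    _ = _ := Fintype.card_of_subtype _ fun f => by
        simp only [mem_erase, mem_union, mem_incidenceFinset, incidenceSet, Set.mem_ofPred_eq,
          Sym2.mem_iff, exists_eq_or_imp, exists_eq_left, ne_comm]
        tauto

theorem degree_totalGraph_inr {a b : V} (h : G.Adj a b) :
    G.totalGraph.degree (.inr ⟨s(a, b), h⟩) = G.degree a + G.degree b := by
  have hends : Fintype.card {v // G.totalGraph.Adj (.inr ⟨s(a, b), h⟩) (.inl v)} = 2 := by
    rw [Fintype.card_of_subtype {a, b} fun v => by simp [totalGraph], card_pair h.ne]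
  have hinter : G.incidenceFinset a ∩ G.incidenceFinset b = {s(a, b)} := by
    ext e
    simp [← Set.mem_inter_iff, G.incidenceSet_inter_incidenceSet_of_adj h]
  have hmem : s(a, b) ∈ G.incidenceFinset a ∪ G.incidenceFinset b := by
    simp [G.mk'_mem_incidenceSet_left_iff.2 h]
  rw [degree_totalGraph, hends, card_totalGraph_adj_inr_inr, ← card_incidenceFinset_eq_degree,
    ← card_incidenceFinset_eq_degree, ← card_union_add_card_inter, hinter, card_singleton,
    ← card_erase_add_one hmem]
  ring

theorem IsRegularOfDegree.totalGraph {k : ℕ} (h : G.IsRegularOfDegree k) :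
    G.totalGraph.IsRegularOfDegree (2 * k) := by
  rintro (u | ⟨e, he⟩)
  · rw [degree_totalGraph_inl, h.degree_eq]
  · induction e using Sym2.ind with
    | _ a b => rw [degree_totalGraph_inr he, h.degree_eq, h.degree_eq, two_mul]

end SimpleGraph

/-- If `G` is a `k`-regular finite simple graph on `n` vertices with `k ≥ 1`, then
`H(T(G)) = n(k + 2)/4`. -/
theorem harmonicIndex_totalGraph_regular {V : Type*} [Fintype V] (G : SimpleGraph V)
    (n k : ℕ) (hk : 1 ≤ k) (hn : Fintype.card V = n) (hreg : G.IsRegularOfDegree k) :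
    G.totalGraph.harmonicIndex = (n : ℝ) * ((k : ℝ) + 2) / 4 := by
  have hedges : (n : ℝ) * k = 2 * Fintype.card G.edgeSet := by
    rw [SimpleGraph.card_edgeSet, ← hn]
    exact_mod_cast hreg.card_mul_eq_two_mul_card_edgeFinset
  rw [hreg.totalGraph.harmonicIndex_eq (by omega), Fintype.card_sum, hn]
  push_cast
  linarith
end
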